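/- Along any closed-loop run under the supervisor Ŝ, the rank never reaches α: for every s ∈ ℒ(Ŝ/G), ξ(δ_P(x_{P,0}, s)) < α, given ξ(x_{P,0}) < α. -/

import Mathlib

open scoped Classical

/-- Extended (partial) transition function on finite event sequences. -/
def runOf {X E : Type} (δ : X → E → Option X) : List E → X → Option X
  | [], x => some x
  | e :: s, x => (δ x e).bind (runOf δ s)

/-- A string consisting only of unobservable events. -/
def UOString {E : Type} (uo : E → Prop) (s : List E) : Prop := ∀ e ∈ s, uo e

/-- Natural projection erasing unobservable events. -/
noncomputable def proj {E : Type} (uo : E → Prop) (s : List E) : List E :=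
  s.filter (fun e => decide (¬ uo e))

/-- Legal control pattern: events with some strictly rank-decreasing occurrence
within the unobservable reach of `x`. -/
def gammaLeg {X E : Type} (δ : X → E → Option X) (uo : E → Prop)
    (ξ : X → ℕ) (x : X) : Set E :=
  {σ | ∃ s y z, UOString uo s ∧ runOf δ s x = some y ∧ δ y σ = some z ∧ ξ z < ξ y}

/-- Unobservable reach of `x` under control pattern `γ`. -/
def UR {X E : Type} (δ : X → E → Option X) (uo : E → Prop)
    (γ : Set E) (x : X) : Set X :=
  {x' | ∃ u : List E, (∀ e ∈ u, uo e ∧ e ∈ γ) ∧ runOf δ u x = some x'}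

/-- Membership in the next-state estimate `NS(s_o)` after observation `s_o`. -/
inductive NSmem {X E : Type} (δ : X → E → Option X) (uo : E → Prop)
    (x0 : X) : List E → X → Prop
  | init : NSmem δ uo x0 [] x0
  | step {so : List E} {x x' x'' : X} {σ : E} :
      NSmem δ uo x0 so x →
      x' ∈ UR δ uo Set.univ x →
      ¬ uo σ → δ x' σ = some x'' → NSmem δ uo x0 (so ++ [σ]) x''

/-- Joint legal control pattern of the state estimate. -/
def gammaLegNS {X E : Type} (δ : X → E → Option X) (uo : E → Prop) (ξ : X → ℕ)
    (x0 : X) (so : List E) : Set E :=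
  {σ | ∃ x, NSmem δ uo x0 so x ∧ σ ∈ gammaLeg δ uo ξ x}

/-- Permissive control pattern at state `x` and step `k`. -/
def gammaPer {X E : Type} (δ : X → E → Option X) (uo : E → Prop) (ξ : X → ℕ)
    (η : ℕ → ℝ) (x : X) (k : ℕ) : Set E :=
  {σ | ∀ s z, UOString uo s → runOf δ (s ++ [σ]) x = some z → (ξ z : ℝ) < η k}

/-- Joint permissive control pattern of the state estimate. -/
def gammaPerNS {X E : Type} (δ : X → E → Option X) (uo : E → Prop) (ξ : X → ℕ)
    (η : ℕ → ℝ) (x0 : X) (so : List E) (k : ℕ) : Set E :=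
  {σ | ∀ x, NSmem δ uo x0 so x → σ ∈ gammaPer δ uo ξ η x k}

/-- The on-line supervisor's control action after observation `so`. -/
def supAct {X E : Type} (δ : X → E → Option X) (uo : E → Prop) (ξ : X → ℕ)
    (η : ℕ → ℝ) (x0 : X) (so : List E) : Set E :=
  gammaLegNS δ uo ξ x0 so ∪ gammaPerNS δ uo ξ η x0 so so.length

/-- `ξ̂(x)`: min over controllable successors' ranks if no uncontrollable event
is defined at `x`, else max over uncontrollable successors' ranks. -/
noncomputable def hatXi {X E : Type} (δ : X → E → Option X) (uc : E → Prop)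
    (ξ : X → ℕ) (x : X) : ℕ :=
  if ∀ e, uc e → δ x e = none then
    sInf {n | ∃ e y, ¬ uc e ∧ δ x e = some y ∧ ξ y = n}
  else
    sSup {n | ∃ e y, uc e ∧ δ x e = some y ∧ ξ y = n}

/-- The update operator `up_α(r, x)`. -/
noncomputable def upA {X : Type} (α : ℕ) (F : Set X) (x : X) (r : ℕ) : ℕ :=
  if x ∉ F ∧ r < α then r + 1 else r

/-- Observability of the product automaton w.r.t. `ξ` and the projection. -/
def Observable {X E : Type} (δ : X → E → Option X) (uo : E → Prop)
    (ξ : X → ℕ) (x0 : X) : Prop :=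
  ∀ s s' : List E, ∀ σ : E,
    (runOf δ s x0).isSome → (runOf δ s' x0).isSome →
    proj uo s = proj uo s' →
    (∃ y z, runOf δ s x0 = some y ∧ δ y σ = some z ∧ ξ z < ξ y) →
    (runOf δ (s' ++ [σ]) x0).isSome →
    ∃ y z, runOf δ s' x0 = some y ∧ δ y σ = some z ∧ ξ z < ξ y

/-- The list of states visited along a run. -/
def visited {X E : Type} (δ : X → E → Option X) : List E → X → Option (List X)
  | [], x => some [x]
  | e :: s, x => (δ x e).bind fun y => (visited δ s y).map (fun l => x :: l)

/-- Closed-loop language of the DES under the on-line supervisor. -/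
inductive CL {X E : Type} (δ : X → E → Option X) (uo : E → Prop) (ξ : X → ℕ)
    (η : ℕ → ℝ) (x0 : X) : List E → Prop
  | nil : CL δ uo ξ η x0 []
  | snoc {s : List E} {σ : E} :
      CL δ uo ξ η x0 s →
      (runOf δ (s ++ [σ]) x0).isSome →
      σ ∈ supAct δ uo ξ η x0 (proj uo s) →
      CL δ uo ξ η x0 (s ++ [σ])

/-!
Induction along the closed-loop string. An event admitted by the legal pattern decreases the
rank from some state of the estimate, i.e. after a string with the same projection as the actual
one; observability transfers the decrease to the actual state, whose rank is below `α` by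
induction. An event admitted by the permissive pattern leads, from every state of the estimate
through any unobservable string, to a rank below `η k ≤ η 0 ≤ α`; the actual state is such a
state, because it is reached from the estimate by an unobservable string.
-/

section Runs

variable {X E : Type} {δ : X → E → Option X}

lemma runOf_append (s t : List E) (x : X) :
    runOf δ (s ++ t) x = (runOf δ s x).bind (runOf δ t) := by
  induction s generalizing x with
  | nil => rfl
  | cons e s ih =>
    simp only [List.cons_append, runOf]
    cases δ x e with
    | none => rfl
    | some y => exact ih y

lemma runOf_append_singleton_eq_some {s : List E} {σ : E} {x z : X} :
    runOf δ (s ++ [σ]) x = some z ↔ ∃ y, runOf δ s x = some y ∧ δ y σ = some z := by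
  rw [runOf_append, Option.bind_eq_some_iff]
  simp only [runOf, Option.bind_fun_some]

end Runs

section Projection

variable {E : Type} {uo : E → Prop}

lemma proj_append (s t : List E) : proj uo (s ++ t) = proj uo s ++ proj uo t :=
  List.filter_append ..

lemma proj_eq_nil_of_uoString {u : List E} (h : UOString uo u) : proj uo u = [] := by
  simpa [proj, List.filter_eq_nil_iff, UOString] using h

lemma proj_append_singleton_of_uo (s : List E) {e : E} (he : uo e) :
    proj uo (s ++ [e]) = proj uo s := by
  simp [proj, he]

lemma proj_append_singleton_of_not_uo (s : List E) {e : E} (he : ¬ uo e) :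
    proj uo (s ++ [e]) = proj uo s ++ [e] := by
  simp [proj, he]

end Projection

section StateEstimate

variable {X E : Type} {δ : X → E → Option X} {uo : E → Prop} {x0 : X}

lemma NSmem.exists_runOf_eq_some {so : List E} {x : X} (h : NSmem δ uo x0 so x) :
    ∃ t, runOf δ t x0 = some x ∧ proj uo t = so := by
  induction h with
  | init => exact ⟨[], rfl, rfl⟩
  | @step _ _ _ _ σ _ hreach hσ hδ ih =>
    obtain ⟨t, ht, rfl⟩ := ih
    obtain ⟨u, hu, hru⟩ := hreach
    refine ⟨t ++ u ++ [σ], runOf_append_singleton_eq_some.mpr ⟨_, ?_, hδ⟩, ?_⟩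
    · rw [runOf_append, ht]
      exact hru
    · rw [proj_append_singleton_of_not_uo _ hσ, proj_append,
        proj_eq_nil_of_uoString fun e he => (hu e he).1, List.append_nil]

lemma exists_NSmem_of_runOf_eq_some {s : List E} {y : X} (hy : runOf δ s x0 = some y) :
    ∃ x u, NSmem δ uo x0 (proj uo s) x ∧ UOString uo u ∧ runOf δ u x = some y := by
  induction s using List.reverseRecOn generalizing y with
  | nil =>
    cases hy
    exact ⟨x0, [], NSmem.init, (fun _ h => nomatch h), rfl⟩
  | append_singleton s e ih =>
    obtain ⟨w, hw, hwe⟩ := runOf_append_singleton_eq_some.mp hy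
    obtain ⟨x, u, hx, hu, hru⟩ := ih hw
    by_cases he : uo e
    · refine ⟨x, u ++ [e], ?_, ?_, runOf_append_singleton_eq_some.mpr ⟨w, hru, hwe⟩⟩
      · rwa [proj_append_singleton_of_uo _ he]
      · exact List.forall_mem_append.mpr ⟨hu, List.forall_mem_singleton.mpr he⟩
    · refine ⟨y, [], ?_, (fun _ h => nomatch h), rfl⟩
      rw [proj_append_singleton_of_not_uo _ he]
      exact NSmem.step hx ⟨u, fun e he => ⟨hu e he, trivial⟩, hru⟩ he hwe

lemma rank_lt_of_mem_gammaLegNS {ξ : X → ℕ} (hobs : Observable δ uo ξ x0) {s : List E}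
    {σ : E} {y z : X} (hσ : σ ∈ gammaLegNS δ uo ξ x0 (proj uo s))
    (hy : runOf δ s x0 = some y) (hz : δ y σ = some z) : ξ z < ξ y := by
  obtain ⟨x, hx, w, y', z', hw, hrw, hδ, hlt⟩ := hσ
  obtain ⟨t, ht, htp⟩ := hx.exists_runOf_eq_some
  have hrun : runOf δ (t ++ w) x0 = some y' := by
    rw [runOf_append, ht]
    exact hrw
  have hproj : proj uo (t ++ w) = proj uo s := by
    rw [proj_append, htp, proj_eq_nil_of_uoString hw, List.append_nil]
  have hsnoc : runOf δ (s ++ [σ]) x0 = some z := runOf_append_singleton_eq_some.mpr ⟨y, hy, hz⟩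
  obtain ⟨y'', z'', hy'', hz'', hlt''⟩ := hobs _ _ σ (by rw [hrun]; rfl) (by rw [hy]; rfl)
    hproj ⟨y', z', hrun, hδ, hlt⟩ (by rw [hsnoc]; rfl)
  cases hy.symm.trans hy''
  cases hz.symm.trans hz''
  exact hlt''

lemma rank_lt_of_mem_gammaPerNS {ξ : X → ℕ} {η : ℕ → ℝ} {s : List E} {σ : E} {y z : X}
    {k : ℕ} (hσ : σ ∈ gammaPerNS δ uo ξ η x0 (proj uo s) k)
    (hy : runOf δ s x0 = some y) (hz : δ y σ = some z) : (ξ z : ℝ) < η k := by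
  obtain ⟨x, u, hx, hu, hru⟩ := exists_NSmem_of_runOf_eq_some hy
  exact hσ x hx u z hu (runOf_append_singleton_eq_some.mpr ⟨y, hru, hz⟩)

end StateEstimate

/-- along any closed-loop string the rank never reaches `α`. -/
theorem stmt15 {X E : Type} (δ : X → E → Option X) (uo : E → Prop)
    (x0 : X) (ξ : X → ℕ) (α : ℕ) (η : ℕ → ℝ)
    (hctrl : ξ x0 < α)
    (hη0 : η 0 ≤ (α : ℝ))
    (hmono : ∀ k, η (k + 1) ≤ η k)
    (hobs : Observable δ uo ξ x0) :
    ∀ s : List E, CL δ uo ξ η x0 s →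
      ∀ y : X, runOf δ s x0 = some y → ξ y < α := by
  intro _ hs
  induction hs with
  | nil =>
    rintro y ⟨⟩
    exact hctrl
  | @snoc s σ _ _ hσ ih =>
    intro z hz
    obtain ⟨y, hy, hyz⟩ := runOf_append_singleton_eq_some.mp hz
    rcases hσ with hleg | hper
    · exact (rank_lt_of_mem_gammaLegNS hobs hleg hy hyz).trans (ih y hy)
    · have hη : η (proj uo s).length ≤ α :=
        (antitone_nat_of_succ_le hmono (Nat.zero_le _)).trans hη0
      exact_mod_cast (rank_lt_of_mem_gammaPerNS hper hy hyz).trans_le hη
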